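/- Let (A_j)_{j ∈ J} be a family of topological abelian groups, P = ∏_{j ∈ J} A_j with the Tychonov topology and canonical embeddings τ_j : A_j → P. Let H be a Hausdorff topological abelian group having no small subgroups (e.g., an abelian Lie group), and let (ψ_j)_{j ∈ J} be a convergent family of continuous homomorphisms ψ_j : A_j → H. Then there exists a unique continuous group homomorphism ω : P → H such that ψ_j = ω ∘ τ_j for all j ∈ J. -/

import Mathlib

/-!
If `V` witnesses that `H` has no small subgroups, every `ψ j` with image inside `V` is trivial,
and convergence says this holds for all but finitely many `j`. The finite product
`x ↦ ∏ ψ j (x j)` over the remaining indices is then the required factorisation. Uniqueness holds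
because every `x` is the unconditional product of the `Pi.mulSingle j (x j)`, and a continuous
homomorphism into a Hausdorff group preserves such products.
-/

theorem MonoidHom.eq_one_of_forall_mem_of_nss {G H : Type*} [Group G] [Group H] {V : Set H}
    (hV : ∀ K : Subgroup H, (K : Set H) ⊆ V → K = ⊥) (φ : G →* H) (hφ : ∀ a, φ a ∈ V) :
    φ = 1 :=
  φ.range_eq_bot_iff.mp <| hV _ <| by rintro _ ⟨a, rfl⟩; exact hφ a

section Pi

variable {J : Type*} [DecidableEq J] {A : J → Type*} [∀ j, CommMonoid (A j)]
  [∀ j, TopologicalSpace (A j)]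

theorem Pi.hasProd_mulSingle (x : ∀ j, A j) : HasProd (fun j ↦ Pi.mulSingle j (x j)) x :=
  Pi.hasProd.mpr fun k ↦ by
    simpa using hasProd_single (f := fun j ↦ Pi.mulSingle j (x j) k) k
      fun j hj ↦ Pi.mulSingle_eq_of_ne' hj _

theorem ContinuousMonoidHom.pi_ext {H : Type*} [CommMonoid H] [TopologicalSpace H] [T2Space H]
    {f g : (∀ j, A j) →ₜ* H} (h : ∀ j a, f (Pi.mulSingle j a) = g (Pi.mulSingle j a)) :
    f = g := by
  ext x
  have hf := (Pi.hasProd_mulSingle x).map f f.continuous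
  have hg := (Pi.hasProd_mulSingle x).map g g.continuous
  simp only [Function.comp_def, h] at hf
  exact hf.unique hg

theorem exists_continuousMonoidHom_map_mulSingle {H : Type*} [CommMonoid H] [TopologicalSpace H]
    [ContinuousMul H] {ψ : ∀ j, A j →* H} (hcont : ∀ j, Continuous (ψ j))
    (hfin : {j | ψ j ≠ 1}.Finite) :
    ∃ ω : (∀ j, A j) →ₜ* H, ∀ j a, ω (Pi.mulSingle j a) = ψ j a := by
  let ω : (∀ j, A j) →* H := ∏ j ∈ hfin.toFinset, (ψ j).comp (Pi.evalMonoidHom A j)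
  have hω : ∀ x, ω x = ∏ j ∈ hfin.toFinset, ψ j (x j) := fun x ↦ by simp [ω]
  refine ⟨⟨ω, ?_⟩, fun i a ↦ ?_⟩
  · show Continuous ω
    rw [funext hω]
    exact continuous_finsetProd _ fun j _ ↦ (hcont j).comp (continuous_apply j)
  · show ω _ = _
    have hψ (j : J) : ψ j (Pi.mulSingle i a j) = (Pi.mulSingle i (ψ i a) : J → H) j :=
      Pi.apply_mulSingle (fun j ↦ ψ j) (fun j ↦ map_one (ψ j)) i a j
    simp_rw [hω, hψ, Finset.prod_pi_mulSingle']
    refine ite_eq_left_iff.mpr fun hi ↦ ?_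
    rw [show ψ i = 1 by simpa using hi, MonoidHom.one_apply]

end Pi

theorem exists_unique_factor_of_nss_general {J : Type*} [DecidableEq J] (A : J → Type*)
    [∀ j, CommGroup (A j)] [∀ j, TopologicalSpace (A j)]
    {H : Type*} [CommGroup H] [TopologicalSpace H] [IsTopologicalGroup H] [T2Space H]
    (hnss : ∃ V ∈ nhds (1 : H), ∀ K : Subgroup H, (K : Set H) ⊆ V → K = ⊥)
    (ψ : ∀ j, A j →* H) (hcont : ∀ j, Continuous (ψ j))
    (hconv : ∀ U ∈ nhds (1 : H), {j : J | ¬ ∀ a : A j, ψ j a ∈ U}.Finite) :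
    ∃! ω : ContinuousMonoidHom (∀ j, A j) H,
      ∀ (j : J) (a : A j), ω (Pi.mulSingle j a) = ψ j a := by
  obtain ⟨V, hV, hVnss⟩ := hnss
  have hfin : {j | ψ j ≠ 1}.Finite :=
    (hconv V hV).subset fun j hj hψV ↦ hj (MonoidHom.eq_one_of_forall_mem_of_nss hVnss _ hψV)
  obtain ⟨ω, hω⟩ := exists_continuousMonoidHom_map_mulSingle hcont hfin
  exact ⟨ω, hω, fun ω' hω' ↦ ContinuousMonoidHom.pi_ext fun j a ↦ by rw [hω', hω]⟩

/-- Universal property of the product as conditional coproduct, for a target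
which is Hausdorff abelian with no small subgroups: every convergent family of
continuous homomorphisms `ψ_j : A_j → H` factors uniquely through the Cartesian
product `∏_j A_j` via the canonical embeddings. -/
theorem exists_unique_factor_of_nss {J : Type*} [DecidableEq J] (A : J → Type*)
    [∀ j, CommGroup (A j)] [∀ j, TopologicalSpace (A j)] [∀ j, IsTopologicalGroup (A j)]
    {H : Type*} [CommGroup H] [TopologicalSpace H] [IsTopologicalGroup H] [T2Space H]
    (hnss : ∃ V ∈ nhds (1 : H), ∀ K : Subgroup H, (K : Set H) ⊆ V → K = ⊥)
    (ψ : ∀ j, A j →* H) (hcont : ∀ j, Continuous (ψ j))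
    (hconv : ∀ U ∈ nhds (1 : H), {j : J | ¬ ∀ a : A j, ψ j a ∈ U}.Finite) :
    ∃! ω : ContinuousMonoidHom (∀ j, A j) H,
      ∀ (j : J) (a : A j), ω (Pi.mulSingle j a) = ψ j a :=
  exists_unique_factor_of_nss_general A hnss ψ hcont hconv
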